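/- arXiv:1210.2442 — 2 statements merged into one kernel-verified Lean document; each statement's English description precedes it below -/
import Mathlib

section
/- Let P be a CPOS polygon such that each pair of consecutive great diagonals d_i, d_{i+1} meets in a unique point D(i+1/2) = P_i + λ(i+1/2)(P_{i+n} − P_i); assume λ(i+1/2) ≠ 1/2 and λ(i+1/2) ≠ λ(i+3/2) for every i. Call D(i_0+1/2) a cusp of the central symmetry set if λ(i_0+1/2) is a strict local extremum of the cyclic sequence (λ(i+1/2))_{i mod 2n}, i.e. λ(i_0+1/2) is either strictly greater than both λ(i_0−1/2) and λ(i_0+3/2), or strictly less than both. Then the number of indices i_0 ∈ {1, …, n} at which the central symmetry set has a cusp is odd, and it is greater than or equal to the number of indices i_0 ∈ {1, …, n} with (λ(i_0−1/2) − 1/2)(λ(i_0+1/2) − 1/2) < 0 (the number of cusps of the area evolute). -/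
open scoped BigOperators Classical

/-- `det2 v w` is the determinant of the 2×2 matrix with columns `v, w ∈ ℝ²`. -/
noncomputable def det2 (v w : ℝ × ℝ) : ℝ := v.1 * w.2 - v.2 * w.1

/-- A convex polygon with parallel opposite sides (CPOS polygon): vertices `P i`, `i : ℤ`,
periodic with period `2n`; the side vectors `e(i+1/2) = P(i+1) - P i` satisfy
`e(i+n+1/2) ∥ e(i+1/2)`, no two adjacent sides are parallel, and the polygon is
positively oriented: `[e(i+1/2), e(j+1/2)] > 0` for `1 ≤ i < j ≤ n`. -/
structure CPOS (n : ℕ) : Type where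
  P : ℤ → ℝ × ℝ
  hn : 2 ≤ n
  periodic : ∀ i : ℤ, P (i + 2 * (n : ℤ)) = P i
  parallel : ∀ i : ℤ, ∃ t : ℝ, P (i + (n : ℤ) + 1) - P (i + (n : ℤ)) = t • (P (i + 1) - P i)
  adj_not_parallel : ∀ i : ℤ, det2 (P (i + 1) - P i) (P (i + 2) - P (i + 1)) ≠ 0
  oriented : ∀ i j : ℤ, 1 ≤ i → i < j → j ≤ (n : ℤ) →
    0 < det2 (P (i + 1) - P i) (P (j + 1) - P j)

/-- `onDiag P n i x` : the point `x` lies on the great diagonal `d_i`,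
the line through `P i` and `P (i+n)`. -/
def onDiag (P : ℤ → ℝ × ℝ) (n : ℕ) (i : ℤ) (x : ℝ × ℝ) : Prop :=
  ∃ t : ℝ, x = P i + t • (P (i + (n : ℤ)) - P i)

/-!
Telescoping the sides and pairing them with one fixed side, orientation makes every term of one
sign, so the great diagonals `d_0` and `d_1` are nondegenerate; the periodicity of `D` then
forces `λ(i+n+1/2) = 1 - λ(i+1/2)` for `i = 0, 1`. Hence both the sign of `λ - 1/2` and the
direction of monotonicity of `λ` are reversed between the indices `0` and `n`, so each changes an
odd number of times on `1, …, n`: the changes of monotonicity are the cusps of the central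
symmetry set, the changes of sign those of the area evolute. Between two consecutive sign changes
of `λ - 1/2` the sequence has to turn, so there is at most one more sign change than turns, and
parity removes the `+ 1`.
-/

lemma det2_self (v : ℝ × ℝ) : det2 v v = 0 := by
  simp only [det2]; ring

lemma det2_smul_left (t : ℝ) (v w : ℝ × ℝ) : det2 (t • v) w = t * det2 v w := by
  simp only [det2, Prod.smul_fst, Prod.smul_snd, smul_eq_mul]; ring

lemma det2_sub_left (a b w : ℝ × ℝ) : det2 (a - b) w = det2 w (b - a) := by
  simp only [det2, Prod.fst_sub, Prod.snd_sub]; ring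

lemma det2_sum {ι : Type*} (v : ℝ × ℝ) (s : Finset ι) (w : ι → ℝ × ℝ) :
    det2 v (∑ i ∈ s, w i) = ∑ i ∈ s, det2 v (w i) := by
  simp only [det2, Prod.fst_sum, Prod.snd_sum, Finset.mul_sum, Finset.sum_sub_distrib]

lemma sum_ne_zero_of_det2_pos {ι : Type*} {s : Finset ι} {v : ℝ × ℝ} {w : ι → ℝ × ℝ}
    (hnonneg : ∀ i ∈ s, 0 ≤ det2 v (w i)) (hpos : ∃ i ∈ s, 0 < det2 v (w i)) :
    ∑ i ∈ s, w i ≠ 0 := by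
  intro h
  have := Finset.sum_pos' hnonneg hpos
  rw [← det2_sum, h] at this
  simp [det2] at this

lemma eq_one_sub_of_add_smul_sub_eq {K V : Type*} [Field K] [AddCommGroup V] [Module K V]
    {a b : V} (hab : a ≠ b) {s t : K} (h : a + s • (b - a) = b + t • (a - b)) : t = 1 - s := by
  have key : (s + t - 1) • (b - a) = 0 := by linear_combination (norm := module) h
  rcases smul_eq_zero.mp key with h | h
  · linear_combination h
  · exact absurd (sub_eq_zero.mp h).symm hab

namespace CPOS

variable {n : ℕ} (C : CPOS n)

/-- The side vector `e(i+1/2)`. -/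
def side (i : ℤ) : ℝ × ℝ := C.P (i + 1) - C.P i

lemma sub_eq_sum_side (a : ℤ) :
    C.P (a + n) - C.P a = ∑ k ∈ Finset.range n, C.side (a + k) := by
  have := Finset.sum_range_sub (fun k : ℕ => C.P (a + k)) n
  simp only [Nat.cast_add, Nat.cast_one, ← add_assoc, Nat.cast_zero, add_zero] at this
  exact this.symm

lemma P_n_ne_P_zero : C.P n ≠ C.P 0 := by
  obtain ⟨t, ht⟩ := C.parallel 0
  simp only [zero_add] at ht
  have hn := C.hn
  rw [Ne, ← sub_eq_zero, ← zero_add (n : ℤ), sub_eq_sum_side]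
  refine sum_ne_zero_of_det2_pos (v := C.P n - C.P (n + 1)) (fun k hk => ?_)
    ⟨1, Finset.mem_range.2 (by omega), ?_⟩
  · rcases Nat.eq_zero_or_pos k with rfl | hk0
    · rw [← neg_sub, ht, ← neg_smul, det2_smul_left, Nat.cast_zero, add_zero, side, zero_add,
        det2_self, mul_zero]
    · rw [det2_sub_left, zero_add]
      exact (C.oriented k n (by exact_mod_cast hk0) (by simpa using hk) le_rfl).le
  · rw [det2_sub_left]
    exact C.oriented 1 n le_rfl (by omega) le_rfl

lemma P_one_add_n_ne_P_one : C.P (1 + n) ≠ C.P 1 := by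
  have hn := C.hn
  rw [Ne, ← sub_eq_zero, sub_eq_sum_side]
  refine sum_ne_zero_of_det2_pos (v := C.side 1) (fun k hk => ?_)
    ⟨1, Finset.mem_range.2 (by omega), ?_⟩
  · rcases Nat.eq_zero_or_pos k with rfl | hk0
    · rw [Nat.cast_zero, add_zero, det2_self]
    · exact (C.oriented 1 (1 + k) le_rfl (by omega) (by have := Finset.mem_range.1 hk; omega)).le
  · exact C.oriented 1 2 le_rfl (by omega) (by omega)

lemma lam_add_n_eq_one_sub {D : ℤ → ℝ × ℝ} {lam : ℤ → ℝ}
    (hlam : ∀ i : ℤ, D i = C.P i + lam i • (C.P (i + n) - C.P i))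
    (hDper : ∀ i : ℤ, D (i + n) = D i) {a : ℤ} (ha : C.P (a + n) ≠ C.P a) :
    lam (a + n) = 1 - lam a := by
  refine eq_one_sub_of_add_smul_sub_eq ha.symm ?_
  rw [← hlam, ← hDper, hlam, add_assoc, ← two_mul, C.periodic]

end CPOS

noncomputable def flipCount (f : ℤ → Bool) (N : ℕ) : ℕ :=
  ((Finset.Icc (1 : ℤ) N).filter (fun i => f (i - 1) ≠ f i)).card

section FlipCount

variable (f g : ℤ → Bool)

@[simp] lemma flipCount_zero : flipCount f 0 = 0 := by simp [flipCount]

lemma flipCount_succ (N : ℕ) :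
    flipCount f (N + 1) = flipCount f N + if f N ≠ f (N + 1) then 1 else 0 := by
  have hIcc : Finset.Icc (1 : ℤ) ((N + 1 : ℕ) : ℤ) =
      insert ((N : ℤ) + 1) (Finset.Icc (1 : ℤ) N) := by
    ext x; simp only [Finset.mem_Icc, Finset.mem_insert]; push_cast; omega
  rw [flipCount, flipCount, hIcc, Finset.filter_insert, add_sub_cancel_right]
  split_ifs <;> simp [Finset.card_insert_of_notMem]

lemma odd_flipCount_iff (N : ℕ) : Odd (flipCount f N) ↔ f 0 ≠ f N := by
  induction N with
  | zero => simp
  | succ N ih =>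
    rw [flipCount_succ, Nat.cast_succ]
    cases h0 : f 0 <;> cases hN : f N <;> cases hN1 : f (N + 1) <;>
      simp_all [Nat.odd_add_one]

-- The induction invariant behind "between two flips of `g` there is a flip of `f`".
lemma flipCount_le_add_ite (hfg : ∀ i : ℤ, g (i - 1) ≠ g i → f (i - 1) = g i) (N : ℕ) :
    flipCount g N ≤ flipCount f N + if f N = g N then 1 else 0 := by
  induction N with
  | zero => simp
  | succ N ih =>
    have h := hfg (N + 1)
    rw [add_sub_cancel_right] at h
    rw [flipCount_succ, flipCount_succ, Nat.cast_succ]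
    cases hgN : g N <;> cases hgN1 : g (N + 1) <;> cases hfN : f N <;> cases hfN1 : f (N + 1) <;>
      simp_all <;> omega

end FlipCount

lemma decide_lt_ne_decide_one_sub_lt {x : ℝ} (hx : x ≠ 1 / 2) :
    decide (1 / 2 < x) ≠ decide (1 / 2 < 1 - x) := by
  rw [ne_eq, decide_eq_decide]
  rcases hx.lt_or_gt with h | h
  · exact fun hiff => h.not_gt (hiff.2 (by linarith))
  · exact fun hiff => (hiff.1 h).not_ge (by linarith)

section RealSequence

variable (u : ℤ → ℝ)

noncomputable def ascent (j : ℤ) : Bool := decide (u j < u (j + 1))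

lemma strictExtr_iff_ascent_ne (hu : ∀ j, u j ≠ u (j + 1)) (i : ℤ) :
    ((u (i - 1) < u i ∧ u (i + 1) < u i) ∨ (u i < u (i - 1) ∧ u i < u (i + 1))) ↔
      ascent u (i - 1) ≠ ascent u i := by
  have hprev := hu (i - 1)
  rw [sub_add_cancel] at hprev
  simp only [ascent, sub_add_cancel, ne_eq, decide_eq_decide]
  rcases hprev.lt_or_gt with h₁ | h₁ <;> rcases (hu i).lt_or_gt with h₂ | h₂ <;>
    simp [h₁, h₂, h₁.le, h₂.le, not_lt.2]

lemma mul_sub_neg_iff_decide_ne {a : ℝ} (ha : ∀ j, u j ≠ a) (i : ℤ) :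
    (u (i - 1) - a) * (u i - a) < 0 ↔ decide (a < u (i - 1)) ≠ decide (a < u i) := by
  rw [mul_neg_iff, sub_pos, sub_neg, sub_pos, sub_neg, ne_eq, decide_eq_decide]
  rcases (ha (i - 1)).lt_or_gt with h₁ | h₁ <;> rcases (ha i).lt_or_gt with h₂ | h₂ <;>
    simp [h₁, h₂, h₁.le, h₂.le, not_lt.2]

lemma ascent_eq_of_decide_ne {a : ℝ} {i : ℤ} (h : decide (a < u (i - 1)) ≠ decide (a < u i)) :
    ascent u (i - 1) = decide (a < u i) := by
  simp only [ascent, sub_add_cancel]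
  rcases lt_or_ge a (u i) with hi | hi
  · have hi' : u (i - 1) ≤ a := by simpa [hi] using h
    simpa [hi] using hi'.trans_lt hi
  · have hi' : a < u (i - 1) := by simpa [hi.not_gt] using h
    simpa [hi.not_gt] using hi.trans hi'.le

lemma ascent_ne_of_eq_one_sub {m : ℤ} (h01 : u 0 ≠ u 1) (hm : u m = 1 - u 0)
    (hm1 : u (m + 1) = 1 - u 1) : ascent u 0 ≠ ascent u m := by
  simp only [ascent, zero_add, hm, hm1, ne_eq, decide_eq_decide, sub_lt_sub_iff_left]
  rcases h01.lt_or_gt with h | h <;> simp [h, h.le, not_lt.2]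

end RealSequence

theorem statement3_general {n : ℕ} (C : CPOS n) (D : ℤ → ℝ × ℝ) (lam : ℤ → ℝ)
    (hlam : ∀ i : ℤ, D i = C.P i + lam i • (C.P (i + (n : ℤ)) - C.P i))
    (hDper : ∀ i : ℤ, D (i + (n : ℤ)) = D i)
    (hhalf : ∀ i : ℤ, lam i ≠ 1 / 2)
    (hne : ∀ i : ℤ, lam i ≠ lam (i + 1)) :
    Odd ((Finset.Icc (1 : ℤ) (n : ℤ)).filter
        (fun i => (lam (i - 1) < lam i ∧ lam (i + 1) < lam i) ∨
          (lam i < lam (i - 1) ∧ lam i < lam (i + 1)))).card ∧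
    ((Finset.Icc (1 : ℤ) (n : ℤ)).filter
        (fun i => (lam (i - 1) - 1 / 2) * (lam i - 1 / 2) < 0)).card ≤
      ((Finset.Icc (1 : ℤ) (n : ℤ)).filter
        (fun i => (lam (i - 1) < lam i ∧ lam (i + 1) < lam i) ∨
          (lam i < lam (i - 1) ∧ lam i < lam (i + 1)))).card := by
  rw [Finset.filter_congr fun i _ => strictExtr_iff_ascent_ne lam hne i,
    Finset.filter_congr fun i _ => mul_sub_neg_iff_decide_ne lam hhalf i]
  change Odd (flipCount (ascent lam) n) ∧
    flipCount (fun j => decide (1 / 2 < lam j)) n ≤ flipCount (ascent lam) n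
  have hlam0 : lam n = 1 - lam 0 := by
    simpa using C.lam_add_n_eq_one_sub hlam hDper (a := 0) (by simpa using C.P_n_ne_P_zero)
  have hlam1 : lam (n + 1) = 1 - lam 1 := by
    rw [add_comm]; exact C.lam_add_n_eq_one_sub hlam hDper C.P_one_add_n_ne_P_one
  have hturns := (odd_flipCount_iff _ n).2 (ascent_ne_of_eq_one_sub lam (by simpa using hne 0)
    hlam0 hlam1)
  have hsigns := (odd_flipCount_iff (fun j => decide (1 / 2 < lam j)) n).2
    (hlam0 ▸ decide_lt_ne_decide_one_sub_lt (hhalf 0))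
  have hle := flipCount_le_add_ite (ascent lam) (fun j => decide (1 / 2 < lam j))
    (fun i h => ascent_eq_of_decide_ne lam h) n
  refine ⟨hturns, ?_⟩
  obtain ⟨k, hk⟩ := hturns
  obtain ⟨m, hm⟩ := hsigns
  split_ifs at hle <;> omega

/-- For a CPOS polygon with `D(i+1/2) = P_i + λ(i+1/2)(P_{i+n} - P_i)` the
unique intersection of `d_i` and `d_{i+1}`, `λ(i+1/2) ≠ 1/2`, and `λ(i+1/2) ≠ λ(i+3/2)` for
all `i`: the number of cusps of the central symmetry set — indices `i₀ ∈ {1,…,n}` where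
`λ(i₀+1/2)` is a strict local extremum of the cyclic sequence — is odd, and it is at least
the number of cusps of the area evolute — indices `i₀ ∈ {1,…,n}` with
`(λ(i₀-1/2) - 1/2)(λ(i₀+1/2) - 1/2) < 0`. (Here `lam i` stands for `λ(i+1/2)`.) -/
theorem statement3 {n : ℕ} (C : CPOS n) (D : ℤ → ℝ × ℝ) (lam : ℤ → ℝ)
    (hD : ∀ i : ℤ, onDiag C.P n i (D i) ∧ onDiag C.P n (i + 1) (D i))
    (huniq : ∀ i : ℤ, ∀ x : ℝ × ℝ, onDiag C.P n i x ∧ onDiag C.P n (i + 1) x → x = D i)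
    (hlam : ∀ i : ℤ, D i = C.P i + lam i • (C.P (i + (n : ℤ)) - C.P i))
    (hDper : ∀ i : ℤ, D (i + (n : ℤ)) = D i)
    (hhalf : ∀ i : ℤ, lam i ≠ 1 / 2)
    (hne : ∀ i : ℤ, lam i ≠ lam (i + 1)) :
    Odd ((Finset.Icc (1 : ℤ) (n : ℤ)).filter
        (fun i => (lam (i - 1) < lam i ∧ lam (i + 1) < lam i) ∨
          (lam i < lam (i - 1) ∧ lam i < lam (i + 1)))).card ∧
    ((Finset.Icc (1 : ℤ) (n : ℤ)).filter
        (fun i => (lam (i - 1) - 1 / 2) * (lam i - 1 / 2) < 0)).card ≤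
      ((Finset.Icc (1 : ℤ) (n : ℤ)).filter
        (fun i => (lam (i - 1) < lam i ∧ lam (i + 1) < lam i) ∨
          (lam i < lam (i - 1) ∧ lam i < lam (i + 1)))).card :=
  statement3_general C D lam hlam hDper hhalf hne
end

section
/- Let n ≥ 3 be odd, let c < 0, and let w_1, …, w_n ∈ ℝ² (indices modulo n) satisfy [w_i, w_{i+1}] = c for all i and Σ_{i=1}^n w_i = 0; let α > 0. Define 2n vectors E_1, …, E_{2n} by: E_i = w_i and E_{n+i} = −α w_i for 1 ≤ i ≤ n odd, and E_i = −α w_i and E_{n+i} = w_i for 1 ≤ i ≤ n even. Then: (a) Σ_{i=1}^{2n} E_i = 0, so the polygonal line with consecutive side vectors E_1, …, E_{2n} closes up; (b) E_{n+i} is parallel to E_i for every i (opposite sides are parallel); (c) [E_i, E_{i+1}] > 0 for all i modulo 2n (local convexity); (d) [E_{i+1}, E_i] takes the same value (namely αc) for all i modulo 2n, i.e. the resulting polygon is equal-area. -/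
open scoped BigOperators

/-! Since `n` is odd, `i` and `n + i` have opposite parity, so the `E` of the theorem is, for every
`i ∈ ℤ`, `w i` at odd `i` and `-α • w i` at even `i`. Each pair of consecutive sides then consists of
one `w` and one `-α • w`, whence `[Eᵢ, Eᵢ₊₁] = -α [wᵢ, wᵢ₊₁] = -α c > 0`; and pairing `Eᵢ` with
`E_{n+i}` gives `Σ Eᵢ = (1 - α) Σ wᵢ = 0`. -/

open Finset Function

theorem det2_swap (v w : ℝ × ℝ) : det2 w v = -det2 v w := by
  unfold det2; ring

theorem det2_neg_smul_left (a : ℝ) (v w : ℝ × ℝ) : det2 (-(a • v)) w = -a * det2 v w := by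
  simp only [det2, Prod.fst_neg, Prod.snd_neg, Prod.smul_fst, Prod.smul_snd, smul_eq_mul]; ring

theorem det2_neg_smul_right (a : ℝ) (v w : ℝ × ℝ) : det2 v (-(a • w)) = -a * det2 v w := by
  simp only [det2, Prod.fst_neg, Prod.snd_neg, Prod.smul_fst, Prod.smul_snd, smul_eq_mul]; ring

theorem Int.sum_Icc_one_two_mul {M : Type*} [AddCommMonoid M] (f : ℤ → M) (p : ℤ) :
    ∑ i ∈ Icc 1 (2 * p), f i = ∑ i ∈ Icc 1 p, (f i + f (i + p)) := by
  have hsplit : Icc 1 (2 * p) = Icc 1 p ∪ (Icc 1 p).map (addRightEmbedding p) := by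
    rw [map_add_right_Icc]; ext; simp only [mem_Icc, mem_union]; omega
  have hdisj : Disjoint (Icc 1 p) ((Icc 1 p).map (addRightEmbedding p)) := by
    rw [map_add_right_Icc, disjoint_left]; intro x; simp only [mem_Icc]; omega
  rw [hsplit, sum_union hdisj, sum_map, sum_add_distrib]
  rfl

theorem Int.eq_of_periodic_of_eqOn_Icc {M : Type*} {f g : ℤ → M} {p : ℤ} (hp : 0 < p)
    (hf : Periodic f p) (hg : Periodic g p) (h : Set.EqOn f g (Set.Icc 1 p)) : f = g := by
  funext j
  have hj : j = ((j - 1) % p + 1) + (j - 1) / p * p := by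
    have := Int.emod_add_ediv_mul (j - 1) p; omega
  have := Int.emod_nonneg (j - 1) hp.ne'
  have := Int.emod_lt_of_pos (j - 1) hp
  have hf' := hf.int_mul ((j - 1) / p)
  have hg' := hg.int_mul ((j - 1) / p)
  simp only [Int.cast_id] at hf' hg'
  rw [hj, hf', hg']
  exact h ⟨by omega, by omega⟩

noncomputable def alternatingSides (α : ℝ) (w : ℤ → ℝ × ℝ) (i : ℤ) : ℝ × ℝ :=
  if Odd i then w i else -(α • w i)

section alternatingSides

variable (α : ℝ) {w : ℤ → ℝ × ℝ}

theorem alternatingSides_periodic {m : ℤ} (hw : Periodic w m) :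
    Periodic (alternatingSides α w) (2 * m) := by
  intro i
  have hw2 : w (i + 2 * m) = w i := by rw [two_mul, ← add_assoc, hw, hw]
  have hodd2 : Odd (i + 2 * m) ↔ Odd i := by simp [parity_simps]
  simp only [alternatingSides, hw2, hodd2]

theorem alternatingSides_add_of_odd {m : ℤ} (hw : Periodic w m) (hm : Odd m) (i : ℤ) :
    alternatingSides α w (i + m) = if Odd i then -(α • w i) else w i := by
  have hodd : Odd (i + m) ↔ ¬Odd i := by simp [parity_simps, Int.not_even_iff_odd.2 hm]
  by_cases hi : Odd i <;> simp [alternatingSides, hw i, hodd, hi]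

theorem det2_alternatingSides (i : ℤ) :
    det2 (alternatingSides α w i) (alternatingSides α w (i + 1)) = -α * det2 (w i) (w (i + 1)) := by
  by_cases hi : Odd i
  · rw [alternatingSides, alternatingSides, if_pos hi, if_neg (by simpa [parity_simps] using hi),
      det2_neg_smul_right]
  · rw [alternatingSides, alternatingSides, if_neg hi, if_pos (by simpa [parity_simps] using hi),
      det2_neg_smul_left]

theorem exists_alternatingSides_add_eq_smul {m : ℤ} (hw : Periodic w m) (hm : Odd m)
    (hα : α ≠ 0) (i : ℤ) : ∃ t : ℝ, alternatingSides α w (i + m) = t • alternatingSides α w i := by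
  rw [alternatingSides_add_of_odd α hw hm, alternatingSides]
  by_cases hi : Odd i
  · exact ⟨-α, by simp [hi]⟩
  · exact ⟨-α⁻¹, by simp [hi, smul_smul, hα]⟩

theorem sum_alternatingSides {m : ℤ} (hw : Periodic w m) (hm : Odd m) :
    ∑ i ∈ Icc 1 (2 * m), alternatingSides α w i = (1 - α) • ∑ i ∈ Icc 1 m, w i := by
  rw [Int.sum_Icc_one_two_mul, smul_sum]
  refine sum_congr rfl fun i _ => ?_
  rw [alternatingSides_add_of_odd α hw hm, alternatingSides]
  by_cases hi : Odd i <;> simp only [hi, if_true, if_false] <;> module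

theorem eq_alternatingSides {m : ℤ} (hm₀ : 0 < m) (hm : Odd m) (hw : Periodic w m)
    {E : ℤ → ℝ × ℝ} (hE : Periodic E (2 * m))
    (hE_odd : ∀ i, 1 ≤ i → i ≤ m → Odd i → E i = w i ∧ E (m + i) = -(α • w i))
    (hE_even : ∀ i, 1 ≤ i → i ≤ m → Even i → E i = -(α • w i) ∧ E (m + i) = w i) :
    E = alternatingSides α w := by
  refine Int.eq_of_periodic_of_eqOn_Icc (by omega) hE (alternatingSides_periodic α hw) ?_
  rintro i ⟨hi₁, hi₂⟩
  rcases le_or_gt i m with him | him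
  · rcases Int.even_or_odd i with he | ho
    · rw [(hE_even i hi₁ him he).1, alternatingSides, if_neg (Int.not_odd_iff_even.2 he)]
    · rw [(hE_odd i hi₁ him ho).1, alternatingSides, if_pos ho]
  · obtain ⟨k, rfl⟩ : ∃ k, i = m + k := ⟨i - m, by ring⟩
    rw [add_comm m k, alternatingSides_add_of_odd α hw hm]
    rcases Int.even_or_odd k with he | ho
    · rw [add_comm, (hE_even k (by omega) (by omega) he).2, if_neg (Int.not_odd_iff_even.2 he)]
    · rw [add_comm, (hE_odd k (by omega) (by omega) ho).2, if_pos ho]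

end alternatingSides

theorem statement5_general {n : ℕ} (hodd : Odd n) (c : ℝ) (hc : c < 0)
    (w : ℤ → ℝ × ℝ) (hper : ∀ i : ℤ, w (i + (n : ℤ)) = w i)
    (hdet : ∀ i : ℤ, det2 (w i) (w (i + 1)) = c)
    (hsum : ∑ i ∈ Finset.Icc (1 : ℤ) (n : ℤ), w i = 0)
    (α : ℝ) (hα : 0 < α)
    (E : ℤ → ℝ × ℝ)
    (hEper : ∀ i : ℤ, E (i + 2 * (n : ℤ)) = E i)
    (hE1 : ∀ i : ℤ, 1 ≤ i → i ≤ (n : ℤ) → Odd i →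
      E i = w i ∧ E ((n : ℤ) + i) = -(α • w i))
    (hE2 : ∀ i : ℤ, 1 ≤ i → i ≤ (n : ℤ) → Even i →
      E i = -(α • w i) ∧ E ((n : ℤ) + i) = w i) :
    (∑ i ∈ Finset.Icc (1 : ℤ) (2 * (n : ℤ)), E i = 0) ∧
    (∀ i : ℤ, ∃ t : ℝ, E (i + (n : ℤ)) = t • E i) ∧
    (∀ i : ℤ, 0 < det2 (E i) (E (i + 1))) ∧
    (∀ i : ℤ, det2 (E (i + 1)) (E i) = α * c) := by
  have hn₀ : (0 : ℤ) < n := by exact_mod_cast hodd.pos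
  have hn : Odd (n : ℤ) := by exact_mod_cast hodd
  obtain rfl : E = alternatingSides α w := eq_alternatingSides α hn₀ hn hper hEper hE1 hE2
  refine ⟨?_, exists_alternatingSides_add_eq_smul α hper hn hα.ne', fun i => ?_, fun i => ?_⟩
  · rw [sum_alternatingSides α hper hn, hsum, smul_zero]
  · rw [det2_alternatingSides, hdet]
    nlinarith
  · rw [det2_swap, det2_alternatingSides, hdet]
    ring

/-- Let `n ≥ 3` be odd, `c < 0`, and `w₁, …, wₙ ∈ ℝ²` (indices mod `n`)
satisfy `[wᵢ, wᵢ₊₁] = c` and `Σ wᵢ = 0`; let `α > 0`. Define `2n` vectors by `Eᵢ = wᵢ`,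
`E_{n+i} = -α wᵢ` for `i` odd, and `Eᵢ = -α wᵢ`, `E_{n+i} = wᵢ` for `i` even (`1 ≤ i ≤ n`).
Then (a) `Σ Eᵢ = 0`; (b) `E_{n+i} ∥ Eᵢ`; (c) `[Eᵢ, Eᵢ₊₁] > 0`; (d) `[Eᵢ₊₁, Eᵢ] = αc` for
all `i` mod `2n` (the polygon with sides `Eᵢ` is a closed, equal-area CPOS polygon). -/
theorem statement5 {n : ℕ} (hn : 3 ≤ n) (hodd : Odd n) (c : ℝ) (hc : c < 0)
    (w : ℤ → ℝ × ℝ) (hper : ∀ i : ℤ, w (i + (n : ℤ)) = w i)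
    (hdet : ∀ i : ℤ, det2 (w i) (w (i + 1)) = c)
    (hsum : ∑ i ∈ Finset.Icc (1 : ℤ) (n : ℤ), w i = 0)
    (α : ℝ) (hα : 0 < α)
    (E : ℤ → ℝ × ℝ)
    (hEper : ∀ i : ℤ, E (i + 2 * (n : ℤ)) = E i)
    (hE1 : ∀ i : ℤ, 1 ≤ i → i ≤ (n : ℤ) → Odd i →
      E i = w i ∧ E ((n : ℤ) + i) = -(α • w i))
    (hE2 : ∀ i : ℤ, 1 ≤ i → i ≤ (n : ℤ) → Even i →
      E i = -(α • w i) ∧ E ((n : ℤ) + i) = w i) :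
    (∑ i ∈ Finset.Icc (1 : ℤ) (2 * (n : ℤ)), E i = 0) ∧
    (∀ i : ℤ, ∃ t : ℝ, E (i + (n : ℤ)) = t • E i) ∧
    (∀ i : ℤ, 0 < det2 (E i) (E (i + 1))) ∧
    (∀ i : ℤ, det2 (E (i + 1)) (E i) = α * c) :=
  statement5_general hodd c hc w hper hdet hsum α hα E hEper hE1 hE2
end
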